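/- arXiv:2402.13179 — 2 statements merged into one kernel-verified Lean document; each statement's English description precedes it below -/
import Mathlib

section
/- Let M be a left H-Hopf module and suppose ν := α ∘ (σ ⊗ 1_M) ∘ φ splits as ν = ι ∘ υ with υ ∘ ι = 1_{M^H} for an object M^H and maps ι: M^H → M, υ: M → M^H. Then ι is the equalizer of φ and η ⊗ 1_M : M → H ⊗ M. -/
open CategoryTheory MonoidalCategory BraidedCategory

universe v u

/-- A Hopf algebra object in a braided monoidal category, given by explicit
structure maps and axioms. -/
structure HopfAlg (C : Type u) [Category.{v} C] [MonoidalCategory C]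
    [BraidedCategory C] where
  H : C
  η : 𝟙_ C ⟶ H
  μ : H ⊗ H ⟶ H
  ε : H ⟶ 𝟙_ C
  δ : H ⟶ H ⊗ H
  σ : H ⟶ H
  mul_assoc : (μ ▷ H) ≫ μ = (α_ H H H).hom ≫ (H ◁ μ) ≫ μ
  one_mul : (η ▷ H) ≫ μ = (λ_ H).hom
  mul_one : (H ◁ η) ≫ μ = (ρ_ H).hom
  coassoc : δ ≫ (δ ▷ H) = δ ≫ (H ◁ δ) ≫ (α_ H H H).inv
  counit_left : δ ≫ (ε ▷ H) = (λ_ H).inv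
  counit_right : δ ≫ (H ◁ ε) = (ρ_ H).inv
  mul_counit : μ ≫ ε = (ε ⊗ₘ ε) ≫ (λ_ (𝟙_ C)).hom
  one_counit : η ≫ ε = 𝟙 (𝟙_ C)
  mul_comul : μ ≫ δ = (δ ⊗ₘ δ) ≫ tensorμ H H H H ≫ (μ ⊗ₘ μ)
  one_comul : η ≫ δ = (λ_ (𝟙_ C)).inv ≫ (η ⊗ₘ η)
  antipode_left : δ ≫ (σ ▷ H) ≫ μ = ε ≫ η
  antipode_right : δ ≫ (H ◁ σ) ≫ μ = ε ≫ η

/-- A left Hopf module over a Hopf algebra object `A` in a braided monoidal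
category: a left `A`-module and left `A`-comodule satisfying the Hopf module
compatibility law. -/
structure HopfModule {C : Type u} [Category.{v} C] [MonoidalCategory C]
    [BraidedCategory C] (A : HopfAlg C) where
  M : C
  act : A.H ⊗ M ⟶ M
  coact : M ⟶ A.H ⊗ M
  act_mul : (A.μ ▷ M) ≫ act = (α_ A.H A.H M).hom ≫ (A.H ◁ act) ≫ act
  act_one : (A.η ▷ M) ≫ act = (λ_ M).hom
  coact_comul : coact ≫ (A.δ ▷ M) = coact ≫ (A.H ◁ coact) ≫ (α_ A.H A.H M).inv
  coact_counit : coact ≫ (A.ε ▷ M) = (λ_ M).inv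
  compat : act ≫ coact = (A.δ ⊗ₘ coact) ≫ tensorμ A.H A.H A.H M ≫ (A.μ ⊗ₘ act)

/-!
The idempotent `ν m = σ(m₋₁) m₀` lands in the coinvariants: by the Hopf module law, the
anti-comultiplicativity of `σ` and coassociativity, `φ (ν m) = σ(m₋₂) m₋₁ ⊗ σ(m₋₃) m₀`, and the
antipode axiom collapses this to `1 ⊗ ν m`. The map `r = α ∘ (σ ⊗ 1)` retracts `η ⊗ 1` and satisfies
`r ∘ φ = ν = ι ∘ υ`, so `ι` together with `υ` and `r` is a split equalizer of `φ` and `η ⊗ 1`.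
-/

section

variable {C : Type u} [Category.{v} C] [MonoidalCategory C] [BraidedCategory C]

namespace HopfAlg

variable (A : HopfAlg C)

abbrev toHopfObj : HopfObj A.H where
  one := A.η
  mul := A.μ
  one_mul := A.one_mul
  mul_one := A.mul_one
  mul_assoc := A.mul_assoc
  counit := A.ε
  comul := A.δ
  counit_comul := A.counit_left
  comul_counit := A.counit_right
  comul_assoc := by simp [reassoc_of% A.coassoc]
  mul_comul := A.mul_comul
  one_comul := A.one_comul
  mul_counit := A.mul_counit
  one_counit := A.one_counit
  antipode := A.σ
  antipode_left := A.antipode_left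
  antipode_right := A.antipode_right

theorem one_antipode : A.η ≫ A.σ = A.η :=
  letI := A.toHopfObj; HopfObj.one_antipode A.H

theorem antipode_comul : A.σ ≫ A.δ = A.δ ≫ (β_ A.H A.H).hom ≫ (A.σ ⊗ₘ A.σ) :=
  letI := A.toHopfObj; HopfObj.antipode_comul A.H

end HopfAlg

theorem tensorμ_braiding_whiskerRight (X Y Z W : C) :
    (α_ X Y (Z ⊗ W)).inv ≫ ((β_ X Y).hom ▷ (Z ⊗ W)) ≫ tensorμ Y X Z W =
      (X ◁ (α_ Y Z W).inv) ≫ (α_ X (Y ⊗ Z) W).inv ≫ ((β_ X (Y ⊗ Z)).hom ▷ W) ≫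
        (α_ (Y ⊗ Z) X W).hom := by
  simp only [tensorμ, braiding_tensor_right_hom, comp_whiskerRight, Category.assoc]
  monoidal

namespace HopfModule

variable {A : HopfAlg C} (N : HopfModule A)

theorem coact_whiskerLeft_coact :
    N.coact ≫ (A.H ◁ N.coact) = N.coact ≫ (A.δ ▷ N.M) ≫ (α_ A.H A.H N.M).hom := by
  rw [reassoc_of% N.coact_comul, Iso.inv_hom_id, Category.comp_id]

def nu : N.M ⟶ N.M := N.coact ≫ (A.σ ▷ N.M) ≫ N.act

theorem antipode_act_coact :
    (A.σ ▷ N.M) ≫ N.act ≫ N.coact =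
      (A.δ ▷ N.M) ≫ ((β_ A.H A.H).hom ▷ N.M) ≫ ((A.H ⊗ A.H) ◁ N.coact) ≫
        tensorμ A.H A.H A.H N.M ≫ (((A.σ ▷ A.H) ≫ A.μ) ⊗ₘ ((A.σ ▷ N.M) ≫ N.act)) := by
  calc (A.σ ▷ N.M) ≫ N.act ≫ N.coact
      = ((A.σ ≫ A.δ) ▷ N.M) ≫ ((A.H ⊗ A.H) ◁ N.coact) ≫
          tensorμ A.H A.H A.H N.M ≫ (A.μ ⊗ₘ N.act) := by
        rw [N.compat, MonoidalCategory.tensorHom_def, comp_whiskerRight]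
        simp only [Category.assoc]
    _ = (A.δ ▷ N.M) ≫ ((β_ A.H A.H).hom ▷ N.M) ≫ ((A.H ⊗ A.H) ◁ N.coact) ≫
          ((A.σ ⊗ₘ A.σ) ▷ (A.H ⊗ N.M)) ≫ tensorμ A.H A.H A.H N.M ≫ (A.μ ⊗ₘ N.act) := by
        rw [A.antipode_comul]
        simp only [comp_whiskerRight, Category.assoc, whisker_exchange_assoc]
    _ = _ := by
        rw [tensorμ_natural_left_assoc, tensorHom_comp_tensorHom]

theorem coact_comul_braiding :
    N.coact ≫ (A.δ ▷ N.M) ≫ ((β_ A.H A.H).hom ▷ N.M) ≫ ((A.H ⊗ A.H) ◁ N.coact) ≫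
        tensorμ A.H A.H A.H N.M =
      N.coact ≫ (A.H ◁ N.coact) ≫ (α_ A.H A.H N.M).inv ≫ ((β_ A.H A.H).hom ▷ N.M) ≫
        ((A.δ ▷ A.H) ▷ N.M) ≫ (α_ (A.H ⊗ A.H) A.H N.M).hom := by
  calc _ = N.coact ≫ (A.H ◁ N.coact) ≫ (A.H ◁ (A.δ ▷ N.M)) ≫ (A.H ◁ (α_ A.H A.H N.M).hom) ≫
          (α_ A.H A.H (A.H ⊗ N.M)).inv ≫ ((β_ A.H A.H).hom ▷ (A.H ⊗ N.M)) ≫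
          tensorμ A.H A.H A.H N.M := by
        rw [← whisker_exchange_assoc, reassoc_of% N.coact_comul,
          ← associator_inv_naturality_right_assoc, ← whiskerLeft_comp_assoc,
          coact_whiskerLeft_coact]
        simp only [whiskerLeft_comp, Category.assoc]
    _ = N.coact ≫ (A.H ◁ N.coact) ≫ (A.H ◁ (A.δ ▷ N.M)) ≫ (α_ A.H (A.H ⊗ A.H) N.M).inv ≫
          ((β_ A.H (A.H ⊗ A.H)).hom ▷ N.M) ≫ (α_ (A.H ⊗ A.H) A.H N.M).hom := by
        rw [tensorμ_braiding_whiskerRight, whiskerLeft_hom_inv_assoc]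
    _ = _ := by
        rw [associator_inv_naturality_middle_assoc, ← comp_whiskerRight_assoc,
          braiding_naturality_right, comp_whiskerRight_assoc]

theorem whiskerLeft_coact_braiding_counit :
    (A.H ◁ N.coact) ≫ (α_ A.H A.H N.M).inv ≫ ((β_ A.H A.H).hom ▷ N.M) ≫
        (α_ A.H A.H N.M).hom ≫ (A.ε ▷ (A.H ⊗ N.M)) = (λ_ (A.H ⊗ N.M)).inv := by
  rw [← associator_naturality_left, ← comp_whiskerRight_assoc, ← braiding_naturality_right,
    braiding_tensorUnit_right, comp_whiskerRight_assoc, ← associator_inv_naturality_middle_assoc,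
    ← whiskerLeft_comp_assoc, N.coact_counit]
  monoidal

theorem nu_comp_coact : N.nu ≫ N.coact = N.nu ≫ (λ_ N.M).inv ≫ (A.η ▷ N.M) := by
  calc N.nu ≫ N.coact
      = N.coact ≫ (A.H ◁ N.coact) ≫ (α_ A.H A.H N.M).inv ≫ ((β_ A.H A.H).hom ▷ N.M) ≫
          ((A.δ ▷ A.H) ▷ N.M) ≫ (α_ (A.H ⊗ A.H) A.H N.M).hom ≫
          (((A.σ ▷ A.H) ≫ A.μ) ⊗ₘ ((A.σ ▷ N.M) ≫ N.act)) := by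
        simp only [nu, Category.assoc, antipode_act_coact, reassoc_of% N.coact_comul_braiding]
    _ = N.coact ≫ (A.H ◁ N.coact) ≫ (α_ A.H A.H N.M).inv ≫ ((β_ A.H A.H).hom ▷ N.M) ≫
          (α_ A.H A.H N.M).hom ≫ (A.ε ▷ (A.H ⊗ N.M)) ≫ (A.η ⊗ₘ ((A.σ ▷ N.M) ≫ N.act)) := by
        rw [associator_naturality_left_assoc, whiskerRight_comp_tensorHom, A.antipode_left,
          whiskerRight_comp_tensorHom]
    _ = N.nu ≫ (λ_ N.M).inv ≫ (A.η ▷ N.M) := by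
        rw [reassoc_of% N.whiskerLeft_coact_braiding_counit, leftUnitor_inv_comp_tensorHom, nu]
        simp only [Category.assoc]

def isSplitEqualizer {MH : C} (ι : MH ⟶ N.M) (υ : N.M ⟶ MH) (h1 : ι ≫ υ = 𝟙 MH)
    (h2 : υ ≫ ι = N.nu) : IsSplitEqualizer N.coact ((λ_ N.M).inv ≫ (A.η ▷ N.M)) ι where
  leftRetraction := υ
  rightRetraction := (A.σ ▷ N.M) ≫ N.act
  condition := by
    have hι : ι ≫ N.nu = ι := by rw [← h2, reassoc_of% h1]
    conv_lhs => rw [← hι]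
    rw [Category.assoc, nu_comp_coact, reassoc_of% hι]
  ι_leftRetraction := h1
  bottom_rightRetraction := by
    rw [Category.assoc, ← comp_whiskerRight_assoc, A.one_antipode, N.act_one, Iso.inv_hom_id]
  top_rightRetraction := h2.symm

end HopfModule

end

open CategoryTheory.Limits in
/-- If the idempotent ν splits as ι ∘ υ, then ι is the equalizer of the
coaction φ and the trivial coaction η ⊗ 1. -/
theorem iota_isEqualizer {C : Type u} [Category.{v} C] [MonoidalCategory C]
    [BraidedCategory C] (A : HopfAlg C) (N : HopfModule A)
    (MH : C) (ι : MH ⟶ N.M) (υ : N.M ⟶ MH)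
    (h1 : ι ≫ υ = 𝟙 MH)
    (h2 : υ ≫ ι = N.coact ≫ (A.σ ▷ N.M) ≫ N.act) :
    ∃ w : ι ≫ N.coact = ι ≫ ((λ_ N.M).inv ≫ (A.η ▷ N.M)),
      Nonempty (IsLimit (Fork.ofι ι w)) :=
  let split := N.isSplitEqualizer ι υ h1 h2
  ⟨split.condition, ⟨split.isEqualizer⟩⟩
end

section
/- Let M be a left H-Hopf module whose idempotent ν splits as ι ∘ υ through M^H. Then υ: M → M^H is the coequalizer of α and ε ⊗ 1_M : H ⊗ M → M. -/
/-! The map `t = (σ ⊗ 1) ∘ φ` is a section of the trivial action `ε ⊗ 1` (as `ε ∘ σ = ε`) and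
satisfies `α ∘ t = ν = ι ∘ υ`, so `υ` is a split coequalizer of `α` and `ε ⊗ 1` as soon as it
coequalizes them. Since `υ = υ ∘ ν`, this reduces to `ν (h • m) = ε(h) ν(m)`, which follows from
the Hopf module law, the braided anti-multiplicativity of `σ` and the antipode axiom. -/

open CategoryTheory MonoidalCategory BraidedCategory

universe v u

section Braiding

variable {C : Type u} [Category.{v} C] [MonoidalCategory C] [BraidedCategory C]

def braidLeft (X Z W : C) : X ⊗ (Z ⊗ W) ⟶ Z ⊗ (X ⊗ W) :=
  (α_ X Z W).inv ≫ ((β_ X Z).hom ▷ W) ≫ (α_ Z X W).hom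

lemma whiskerRight_braidLeft {X Y : C} (f : X ⟶ Y) (Z W : C) :
    (f ▷ (Z ⊗ W)) ≫ braidLeft Y Z W = braidLeft X Z W ≫ (Z ◁ (f ▷ W)) := by
  simp only [braidLeft, Category.assoc]
  rw [associator_inv_naturality_left_assoc, ← comp_whiskerRight_assoc, braiding_naturality_left,
    comp_whiskerRight_assoc, associator_naturality_middle]

lemma braidLeft_tensorUnit (Z W : C) :
    braidLeft (𝟙_ C) Z W = (λ_ (Z ⊗ W)).hom ≫ (Z ◁ (λ_ W).inv) := by
  simp [braidLeft]

lemma tensorμ_braiding_eq_braidLeft (X Y Z W : C) :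
    tensorμ X Y Z W ≫ ((β_ X Z).hom ▷ (Y ⊗ W)) ≫ (α_ Z X (Y ⊗ W)).hom ≫
      (Z ◁ (α_ X Y W).inv) = braidLeft (X ⊗ Y) Z W := by
  simp [braidLeft, tensorμ, braiding_tensor_left_hom]

end Braiding

namespace HopfAlg

variable {C : Type u} [Category.{v} C] [MonoidalCategory C] [BraidedCategory C] (A : HopfAlg C)

instance : HopfObj A.H where
  one := A.η
  mul := A.μ
  one_mul := A.one_mul
  mul_one := A.mul_one
  mul_assoc := A.mul_assoc
  counit := A.ε
  comul := A.δ
  counit_comul := A.counit_left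
  comul_counit := A.counit_right
  comul_assoc := by
    rw [← cancel_mono (α_ A.H A.H A.H).inv]
    simpa using A.coassoc.symm
  mul_comul := A.mul_comul
  one_comul := A.one_comul
  mul_counit := by simpa using A.mul_counit
  one_counit := A.one_counit
  antipode := A.σ
  antipode_left := A.antipode_left
  antipode_right := A.antipode_right

lemma mul_antipode : A.μ ≫ A.σ = (A.σ ⊗ₘ A.σ) ≫ (β_ A.H A.H).hom ≫ A.μ :=
  HopfObj.mul_antipode A.H

lemma antipode_counit : A.σ ≫ A.ε = A.ε :=
  HopfObj.antipode_counit A.H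

end HopfAlg

namespace HopfModule

variable {C : Type u} [Category.{v} C] [MonoidalCategory C] [BraidedCategory C] {A : HopfAlg C}
  (N : HopfModule A)

def coinvProj : N.M ⟶ N.M := N.coact ≫ (A.σ ▷ N.M) ≫ N.act

lemma coact_antipode_trivialAct :
    N.coact ≫ (A.σ ▷ N.M) ≫ (A.ε ▷ N.M) ≫ (λ_ N.M).hom = 𝟙 N.M := by
  rw [← comp_whiskerRight_assoc, A.antipode_counit, reassoc_of% N.coact_counit,
    Iso.inv_hom_id]

lemma whiskerLeft_act_act :
    (A.H ◁ N.act) ≫ N.act = (α_ A.H A.H N.M).inv ≫ (A.μ ▷ N.M) ≫ N.act := by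
  rw [N.act_mul, Iso.inv_hom_id_assoc]

/-- In Sweedler notation, `ν (h • m) = S(m₋₁) • ((S(h₁) h₂) • m₀)`. -/
lemma act_comp_coinvProj_eq_braidLeft :
    N.act ≫ N.coinvProj = (A.δ ⊗ₘ N.coact) ≫ braidLeft (A.H ⊗ A.H) A.H N.M ≫
      (A.H ◁ (((A.σ ▷ A.H ≫ A.μ) ▷ N.M) ≫ N.act)) ≫ (A.σ ▷ N.M) ≫ N.act := by
  calc N.act ≫ N.coinvProj
      = (A.δ ⊗ₘ N.coact) ≫ tensorμ A.H A.H A.H N.M ≫ ((A.μ ≫ A.σ) ⊗ₘ N.act) ≫ N.act := by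
        simp only [coinvProj, reassoc_of% N.compat, tensorHom_def', comp_whiskerRight,
          Category.assoc]
    _ = (A.δ ⊗ₘ N.coact) ≫ tensorμ A.H A.H A.H N.M ≫
          (((A.σ ⊗ₘ A.σ) ≫ (β_ A.H A.H).hom) ▷ (A.H ⊗ N.M)) ≫ (α_ A.H A.H (A.H ⊗ N.M)).hom ≫
          (A.H ◁ ((A.H ◁ N.act) ≫ N.act)) ≫ N.act := by
        rw [A.mul_antipode, ← Category.assoc (A.σ ⊗ₘ A.σ),
          MonoidalCategory.tensorHom_def (_ ≫ A.μ), comp_whiskerRight,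
          Category.assoc, Category.assoc, ← whisker_exchange_assoc, N.act_mul,
          associator_naturality_right_assoc, MonoidalCategory.whiskerLeft_comp_assoc]
    _ = (A.δ ⊗ₘ N.coact) ≫ tensorμ A.H A.H A.H N.M ≫ ((β_ A.H A.H).hom ▷ (A.H ⊗ N.M)) ≫
          (α_ A.H A.H (A.H ⊗ N.M)).hom ≫ (A.H ◁ (α_ A.H A.H N.M).inv) ≫
          (A.H ◁ (((A.σ ▷ A.H ≫ A.μ) ▷ N.M) ≫ N.act)) ≫ (A.σ ▷ N.M) ≫ N.act := by
        rw [braiding_naturality, comp_whiskerRight, MonoidalCategory.tensorHom_def A.σ A.σ,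
          comp_whiskerRight]
        simp only [Category.assoc, associator_naturality_left_assoc,
          associator_naturality_middle_assoc, ← whisker_exchange_assoc]
        simp only [← MonoidalCategory.whiskerLeft_comp_assoc, whiskerLeft_act_act,
          associator_inv_naturality_left_assoc, comp_whiskerRight_assoc]
    _ = _ := by
        rw [reassoc_of% tensorμ_braiding_eq_braidLeft]

lemma act_comp_coinvProj :
    N.act ≫ N.coinvProj = ((A.ε ▷ N.M) ≫ (λ_ N.M).hom) ≫ N.coinvProj := by
  calc N.act ≫ N.coinvProj
      = (A.δ ⊗ₘ N.coact) ≫ braidLeft (A.H ⊗ A.H) A.H N.M ≫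
          (A.H ◁ (((A.σ ▷ A.H ≫ A.μ) ▷ N.M) ≫ N.act)) ≫ (A.σ ▷ N.M) ≫ N.act :=
        N.act_comp_coinvProj_eq_braidLeft
    _ = ((A.δ ≫ A.σ ▷ A.H ≫ A.μ) ⊗ₘ N.coact) ≫ braidLeft A.H A.H N.M ≫
          (A.H ◁ N.act) ≫ (A.σ ▷ N.M) ≫ N.act := by
        simp only [tensorHom_def', comp_whiskerRight, Category.assoc,
          reassoc_of% whiskerRight_braidLeft, MonoidalCategory.whiskerLeft_comp]
    _ = ((A.ε ≫ A.η) ⊗ₘ N.coact) ≫ braidLeft A.H A.H N.M ≫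
          (A.H ◁ N.act) ≫ (A.σ ▷ N.M) ≫ N.act := by
        rw [A.antipode_left]
    _ = ((A.ε ▷ N.M) ≫ (λ_ N.M).hom) ≫ N.coinvProj := by
        rw [tensorHom_def', comp_whiskerRight, Category.assoc, Category.assoc,
          reassoc_of% whiskerRight_braidLeft, ← MonoidalCategory.whiskerLeft_comp_assoc, N.act_one,
          braidLeft_tensorUnit, Category.assoc, ← MonoidalCategory.whiskerLeft_comp_assoc, Iso.inv_hom_id,
          MonoidalCategory.whiskerLeft_id, Category.id_comp, whisker_exchange_assoc,
          leftUnitor_naturality_assoc, coinvProj, Category.assoc]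

end HopfModule

open CategoryTheory.Limits in
/-- If the idempotent ν splits as ι ∘ υ, then υ is the coequalizer of the
action α and the trivial action ε ⊗ 1. -/
theorem upsilon_isCoequalizer {C : Type u} [Category.{v} C] [MonoidalCategory C]
    [BraidedCategory C] (A : HopfAlg C) (N : HopfModule A)
    (MH : C) (ι : MH ⟶ N.M) (υ : N.M ⟶ MH)
    (h1 : ι ≫ υ = 𝟙 MH)
    (h2 : υ ≫ ι = N.coact ≫ (A.σ ▷ N.M) ≫ N.act) :
    ∃ w : N.act ≫ υ = ((A.ε ▷ N.M) ≫ (λ_ N.M).hom) ≫ υ,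
      Nonempty (IsColimit (Cofork.ofπ υ w)) := by
  have coinvProj_υ : N.coinvProj ≫ υ = υ := by
    rw [HopfModule.coinvProj, ← h2, Category.assoc, h1, Category.comp_id]
  let split : IsSplitCoequalizer N.act ((A.ε ▷ N.M) ≫ (λ_ N.M).hom) υ :=
    { rightSection := ι
      leftSection := N.coact ≫ (A.σ ▷ N.M)
      condition := by rw [← coinvProj_υ, reassoc_of% N.act_comp_coinvProj, Category.assoc]
      rightSection_π := h1
      leftSection_bottom := by simpa using N.coact_antipode_trivialAct
      leftSection_top := by simpa using h2.symm }
  exact ⟨split.condition, ⟨split.isCoequalizer⟩⟩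
end
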